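/- Fix real numbers α > 0, β > 0, and R > 0, and set γ_R = α·γ_D and γ_E = (α/β)·γ_D (so that γ_R = α·γ_D = β·γ_E). Then (i) lim_{γ_D → ∞} 𝒫₂(α·γ_D, γ_D, (α/β)·γ_D, R) = 𝒫₂^lim := 1 − 1/(1 + (1/β)·2^R), and (ii) lim_{γ_D → ∞} γ_D · (𝒫₂(α·γ_D, γ_D, (α/β)·γ_D, R) − 𝒫₂^lim) = 𝓜̂₂ := (2^R − 1)(1 + 1/α) / (1 + (1/β)·2^R). -/

import Mathlib

/-! With `γ_R = α γ_D` and `γ_E = (α/β) γ_D` the ratio `γ_E / γ_R = 1/β` is constant, so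
`𝒫₂ = 1 − A · exp(−t/γ_D)` with `A = (1 + 2^R/β)⁻¹` and `t = (2^R − 1)(1 + 1/α)`.
Both limits then come from `exp` being continuous with derivative `1` at `0`:
`γ_D (1 − exp(−t/γ_D)) → t`. -/

open Filter Real

/-- Case II closed-form secrecy outage probability. -/
noncomputable def P2 (γR γD γE R : ℝ) : ℝ :=
  1 - Real.exp (-((2 : ℝ) ^ R - 1) / γD - ((2 : ℝ) ^ R - 1) / γR) *
    (1 + ((2 : ℝ) ^ R / γR) * γE)⁻¹

open Topology

theorem HasDerivAt.tendsto_mul_sub_inv_atTop {f : ℝ → ℝ} {f' : ℝ} (hf : HasDerivAt f f' 0) :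
    Tendsto (fun x => x * (f x⁻¹ - f 0)) atTop (𝓝 f') := by
  have hslope := (hasDerivAt_iff_tendsto_slope_zero.1 hf).comp
    (tendsto_inv_atTop_nhdsGT_zero.mono_right (nhdsWithin_mono _ fun _ hx => ne_of_gt hx))
  simpa [Function.comp_def] using hslope

theorem tendsto_mul_one_sub_exp_neg_div_atTop (t : ℝ) :
    Tendsto (fun x => x * (1 - exp (-(t / x)))) atTop (𝓝 t) := by
  have hderiv : HasDerivAt (fun u => -exp (-(t * u))) t 0 := by
    refine (((hasDerivAt_id' (0 : ℝ)).const_mul t).fun_neg.exp).fun_neg.congr_deriv ?_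
    simp
  convert hderiv.tendsto_mul_sub_inv_atTop using 2 with x
  simp only [mul_zero, neg_zero, exp_zero, div_eq_mul_inv]
  ring

theorem P2_proportional_eq (α β R x : ℝ) (hα : α ≠ 0) (hx : x ≠ 0) :
    P2 (α * x) x ((α / β) * x) R =
      1 - exp (-(((2 : ℝ) ^ R - 1) * (1 + 1 / α) / x)) * (1 + (1 / β) * (2 : ℝ) ^ R)⁻¹ := by
  have hexponent : -((2 : ℝ) ^ R - 1) / x - ((2 : ℝ) ^ R - 1) / (α * x) =
      -(((2 : ℝ) ^ R - 1) * (1 + 1 / α) / x) := by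
    field_simp
    ring
  have hratio : 1 + ((2 : ℝ) ^ R / (α * x)) * ((α / β) * x) = 1 + (1 / β) * (2 : ℝ) ^ R := by
    field_simp
  rw [P2, hexponent, hratio]

theorem case2_asymptotic_proportional_general (α β R : ℝ) (hα : 0 < α) :
    Tendsto (fun γD : ℝ => P2 (α * γD) γD ((α / β) * γD) R) atTop
      (nhds (1 - (1 + (1 / β) * (2 : ℝ) ^ R)⁻¹)) ∧
    Tendsto (fun γD : ℝ =>
        γD * (P2 (α * γD) γD ((α / β) * γD) R - (1 - (1 + (1 / β) * (2 : ℝ) ^ R)⁻¹)))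
      atTop
      (nhds (((2 : ℝ) ^ R - 1) * (1 + 1 / α) / (1 + (1 / β) * (2 : ℝ) ^ R))) := by
  set t := ((2 : ℝ) ^ R - 1) * (1 + 1 / α)
  set A := (1 + (1 / β) * (2 : ℝ) ^ R)⁻¹
  have hP2 : (fun γD => 1 - exp (-(t / γD)) * A) =ᶠ[atTop]
      fun γD => P2 (α * γD) γD ((α / β) * γD) R := by
    filter_upwards [eventually_ne_atTop 0] with γD hγD
    rw [P2_proportional_eq α β R γD hα.ne' hγD]
  have hexp : Tendsto (fun γD => exp (-(t / γD))) atTop (𝓝 1) := by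
    simpa using (tendsto_const_nhds (x := t)).div_atTop tendsto_id |>.neg.rexp
  constructor
  · refine Tendsto.congr' hP2 ?_
    simpa using (tendsto_const_nhds (x := (1 : ℝ))).sub (hexp.mul_const A)
  · rw [show t / (1 + 1 / β * (2 : ℝ) ^ R) = A * t from mul_comm _ _]
    refine ((tendsto_mul_one_sub_exp_neg_div_atTop t).const_mul A).congr' ?_
    filter_upwards [hP2] with γD hγD
    rw [← hγD]
    ring

/-- Theorem 6 (Case II, second high-SNR scenario): with `γ_R = α·γ_D = β·γ_E → ∞`,
(i) `𝒫₂ → 𝒫₂^lim = 1 − 1/(1 + (1/β)·2^R)` and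
(ii) `γ_D·(𝒫₂ − 𝒫₂^lim) → 𝓜̂₂ = (2^R − 1)(1 + 1/α)/(1 + (1/β)·2^R)`. -/
theorem case2_asymptotic_proportional (α β R : ℝ) (hα : 0 < α) (hβ : 0 < β) (hR : 0 < R) :
    Tendsto (fun γD : ℝ => P2 (α * γD) γD ((α / β) * γD) R) atTop
      (nhds (1 - (1 + (1 / β) * (2 : ℝ) ^ R)⁻¹)) ∧
    Tendsto (fun γD : ℝ =>
        γD * (P2 (α * γD) γD ((α / β) * γD) R - (1 - (1 + (1 / β) * (2 : ℝ) ^ R)⁻¹)))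
      atTop
      (nhds (((2 : ℝ) ^ R - 1) * (1 + 1 / α) / (1 + (1 / β) * (2 : ℝ) ^ R))) :=
  case2_asymptotic_proportional_general α β R hα
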